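/- arXiv:2011.10810 — 4 statements merged into one kernel-verified Lean document; each statement's English description precedes it below -/
import Mathlib

section
/- Let C_{n+1} be a positive definite symmetric Toeplitz (n+1)×(n+1) real matrix and let C_n be its upper-left n×n principal submatrix. Then (1/n)·tr(C_n⁻¹) ≤ (1/(n+1))·tr(C_{n+1}⁻¹). -/
/-!
For positive definite `M`, `M⁻¹ i i` is the maximum of `2 yᵢ - yᵀ M y`, attained at
`y = M⁻¹ eᵢ`. Restricting `y` to vectors supported on a set of coordinates shows that each
diagonal entry of the inverse of a principal submatrix is at most the corresponding diagonal
entry of `M⁻¹`. Being Toeplitz, `C_n` is both the leading and the trailing principal `n × n`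
block of `C_{n+1}`, so `(C_n⁻¹)_{jj}` is bounded by both `(C_{n+1}⁻¹)_{jj}` and
`(C_{n+1}⁻¹)_{j+1,j+1}`. Weighting these two bounds by `n - j` and `j + 1` and summing over `j`
gives `(n + 1) tr C_n⁻¹ ≤ n tr C_{n+1}⁻¹`.
-/

open Matrix Finset

/-- The symmetric Toeplitz matrix of size n built from the sequence c. -/
def toeplitz (c : ℕ → ℝ) (n : ℕ) : Matrix (Fin n) (Fin n) ℝ :=
  Matrix.of fun i j => c ((i : ℤ) - (j : ℤ)).natAbs

namespace Matrix

variable {ι κ R : Type*} [DecidableEq ι]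

lemma mulVec_col_inv [Fintype ι] [CommRing R] {M : Matrix ι ι R} (hM : IsUnit M.det) (i : ι) :
    M *ᵥ M⁻¹.col i = Pi.single i 1 := by
  rw [← mulVec_single_one, mulVec_mulVec, mul_nonsing_inv _ hM, one_mulVec]

lemma PosDef.two_mul_sub_dotProduct_mulVec_le_inv_apply [Fintype ι] {M : Matrix ι ι ℝ}
    (hM : M.PosDef) (i : ι) (y : ι → ℝ) : 2 * y i - y ⬝ᵥ (M *ᵥ y) ≤ M⁻¹ i i := by
  set w := M⁻¹.col i
  have hMw : M *ᵥ w = Pi.single i 1 := mulVec_col_inv hM.det_pos.ne'.isUnit i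
  have hsymm : Mᵀ = M := by simpa using hM.isHermitian.eq
  have hyw : y ⬝ᵥ (M *ᵥ w) = y i := by rw [hMw, dotProduct_single, mul_one]
  have hwy : w ⬝ᵥ (M *ᵥ y) = y i := by
    rw [dotProduct_mulVec, ← mulVec_transpose, hsymm, hMw, single_dotProduct, one_mul]
  have hww : w ⬝ᵥ (M *ᵥ w) = M⁻¹ i i := by
    rw [hMw, dotProduct_single, mul_one]
    rfl
  have hnonneg : 0 ≤ (y - w) ⬝ᵥ (M *ᵥ (y - w)) := by
    simpa using hM.posSemidef.dotProduct_mulVec_nonneg (y - w)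
  rw [mulVec_sub, dotProduct_sub, sub_dotProduct, sub_dotProduct, hyw, hwy, hww] at hnonneg
  linarith

lemma transpose_submatrix_one_mul_mul_submatrix_one [Fintype ι] [CommSemiring R]
    (M : Matrix ι ι R) (f : κ → ι) :
    ((1 : Matrix ι ι R).submatrix id f)ᵀ * M * (1 : Matrix ι ι R).submatrix id f
      = M.submatrix f f := by
  ext a b
  simp [mul_apply, one_apply]

lemma dotProduct_mulVec_submatrix_one_mulVec [Fintype ι] [Fintype κ] [CommSemiring R]
    (M : Matrix ι ι R) (f : κ → ι) (z : κ → R) :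
    ((1 : Matrix ι ι R).submatrix id f *ᵥ z) ⬝ᵥ (M *ᵥ ((1 : Matrix ι ι R).submatrix id f *ᵥ z))
      = z ⬝ᵥ (M.submatrix f f *ᵥ z) := by
  rw [← transpose_submatrix_one_mul_mul_submatrix_one, ← mulVec_mulVec, ← mulVec_mulVec,
    mulVec_transpose, dotProduct_comm z, ← dotProduct_mulVec, dotProduct_comm]

lemma submatrix_one_mulVec_apply [Fintype κ] [NonAssocSemiring R] {f : κ → ι}
    (hf : Function.Injective f) (z : κ → R) (k : κ) :
    ((1 : Matrix ι ι R).submatrix id f *ᵥ z) (f k) = z k := by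
  rw [mulVec, dotProduct, Fintype.sum_eq_single k]
  · simp [one_apply]
  · intro j hj
    simp [hf.ne (Ne.symm hj)]

lemma PosDef.inv_submatrix_apply_le [Fintype ι] [Fintype κ] [DecidableEq κ]
    {M : Matrix ι ι ℝ} (hM : M.PosDef) {f : κ → ι} (hf : Function.Injective f) (k : κ) :
    (M.submatrix f f)⁻¹ k k ≤ M⁻¹ (f k) (f k) := by
  have h := hM.two_mul_sub_dotProduct_mulVec_le_inv_apply (f k)
    ((1 : Matrix ι ι ℝ).submatrix id f *ᵥ (M.submatrix f f)⁻¹.col k)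
  rw [dotProduct_mulVec_submatrix_one_mulVec, submatrix_one_mulVec_apply hf,
    mulVec_col_inv (hM.submatrix hf).det_pos.ne'.isUnit, dotProduct_single, mul_one,
    col_apply] at h
  linarith

end Matrix

lemma toeplitz_submatrix_castSucc (c : ℕ → ℝ) (n : ℕ) :
    (toeplitz c (n + 1)).submatrix Fin.castSucc Fin.castSucc = toeplitz c n := by
  ext i j
  simp [toeplitz]

lemma toeplitz_submatrix_succ (c : ℕ → ℝ) (n : ℕ) :
    (toeplitz c (n + 1)).submatrix Fin.succ Fin.succ = toeplitz c n := by
  ext i j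
  simp [toeplitz, Fin.val_succ]

lemma Fin.succ_mul_sum_le_mul_sum_of_le_castSucc_of_le_succ {n : ℕ} {a : Fin n → ℝ}
    {b : Fin (n + 1) → ℝ} (hcast : ∀ j, a j ≤ b j.castSucc) (hsucc : ∀ j, a j ≤ b j.succ) :
    ((n : ℝ) + 1) * ∑ j, a j ≤ n * ∑ k, b k := by
  have hcast_sum : ∑ j : Fin n, ((n : ℝ) - j) * b j.castSucc
      = ∑ k : Fin (n + 1), ((n : ℝ) - k) * b k := by
    simp [Fin.sum_univ_castSucc (fun k : Fin (n + 1) => ((n : ℝ) - k) * b k)]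
  have hsucc_sum : ∑ j : Fin n, ((j : ℝ) + 1) * b j.succ = ∑ k : Fin (n + 1), (k : ℝ) * b k := by
    simp [Fin.sum_univ_succ (fun k : Fin (n + 1) => (k : ℝ) * b k)]
  calc ((n : ℝ) + 1) * ∑ j, a j
      = ∑ j : Fin n, (((n : ℝ) - j) * a j + ((j : ℝ) + 1) * a j) := by
        rw [mul_sum]; congr! 1; ring
    _ ≤ ∑ j : Fin n, (((n : ℝ) - j) * b j.castSucc + ((j : ℝ) + 1) * b j.succ) := by
        gcongr with j
        · exact sub_nonneg.2 (by exact_mod_cast j.isLt.le)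
        · exact hcast j
        · exact hsucc j
    _ = n * ∑ k, b k := by
        rw [sum_add_distrib, hcast_sum, hsucc_sum, ← sum_add_distrib, mul_sum]; congr! 1; ring

theorem normalized_trace_inverse_monotone_general (n : ℕ) (c : ℕ → ℝ)
    (hPD : (toeplitz c (n + 1)).PosDef) :
    (1 / (n : ℝ)) * ((toeplitz c n)⁻¹).trace ≤
      (1 / ((n : ℝ) + 1)) * ((toeplitz c (n + 1))⁻¹).trace := by
  have key : ((n : ℝ) + 1) * (toeplitz c n)⁻¹.trace ≤ n * (toeplitz c (n + 1))⁻¹.trace := by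
    refine Fin.succ_mul_sum_le_mul_sum_of_le_castSucc_of_le_succ (fun j => ?_) (fun j => ?_)
    · simpa [toeplitz_submatrix_castSucc] using
        hPD.inv_submatrix_apply_le (Fin.castSucc_injective n) j
    · simpa [toeplitz_submatrix_succ] using hPD.inv_submatrix_apply_le (Fin.succ_injective n) j
  rcases n.eq_zero_or_pos with rfl | hn
  · simpa using hPD.inv.posSemidef.trace_nonneg
  · rw [one_div_mul_eq_div, one_div_mul_eq_div, div_le_div_iff₀ (by positivity) (by positivity)]
    linarith

/-- For a positive definite symmetric Toeplitz (n+1)×(n+1) matrix C_{n+1} with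
upper-left n×n principal submatrix C_n, the normalized trace-inverse is monotone:
(1/n)·tr(C_n⁻¹) ≤ (1/(n+1))·tr(C_{n+1}⁻¹). -/
theorem normalized_trace_inverse_monotone (n : ℕ) (hn : 0 < n) (c : ℕ → ℝ)
    (hPD : (toeplitz c (n + 1)).PosDef) :
    (1 / (n : ℝ)) * ((toeplitz c n)⁻¹).trace ≤
      (1 / ((n : ℝ) + 1)) * ((toeplitz c (n + 1))⁻¹).trace :=
  normalized_trace_inverse_monotone_general n c hPD
end

section
/- Let C_{n+1} be a positive definite symmetric Toeplitz (n+1)×(n+1) matrix with C_n its upper-left n×n principal submatrix. Then (1/n)tr(C_n⁻¹) = (1/(n+1))tr(C_{n+1}⁻¹) if and only if C_{n+1} = c_0 · I_{n+1}, i.e., the Toeplitz coefficients satisfy c_1 = c_2 = ⋯ = c_n = 0. -/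
/-!
For positive definite `A` and an isometry `E` (`Eᴴ E = 1`), with `B = A⁻¹ E - E (Eᴴ A E)⁻¹`,
`Eᴴ A⁻¹ E - (Eᴴ A E)⁻¹ = Bᴴ A B`. Taking for `E` the selection of a set of coordinates, the
inverse of a principal submatrix is dominated by the corresponding block of `A⁻¹`, and the two
agree only when `B = 0`, i.e. when `A` maps the span of those coordinates into itself.

The leading and trailing `n × n` blocks of the Toeplitz matrix `C_{n+1}` both equal `C_n`.
Weighting the two diagonal comparisons by `n - k` and `k + 1` writes
`n tr C_{n+1}⁻¹ - (n + 1) tr C_n⁻¹` as a sum of nonnegative terms. Equality forces the leading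
block of `C_{n+1}⁻¹` to be `C_n⁻¹`, so the last row `c_n, …, c_1, c_0` of `C_{n+1}` vanishes
off the diagonal.
-/

open Matrix Finset

namespace Matrix

section Selection

variable {l m n α : Type*} [Fintype m] [DecidableEq m]

lemma mul_one_submatrix_id [NonAssocSemiring α] (M : Matrix l m α) (f : n → m) :
    M * (1 : Matrix m m α).submatrix id f = M.submatrix id f :=
  mul_submatrix_one (Equiv.refl m) f M

lemma one_submatrix_id_mul [NonAssocSemiring α] (M : Matrix m l α) (f : n → m) :
    (1 : Matrix m m α).submatrix f id * M = M.submatrix f id :=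
  one_submatrix_mul f (Equiv.refl m) M

lemma conjTranspose_one_submatrix_id_mul_mul [Semiring α] [StarRing α] (M : Matrix m m α)
    (f : n → m) :
    ((1 : Matrix m m α).submatrix id f)ᴴ * M * (1 : Matrix m m α).submatrix id f =
      M.submatrix f f := by
  rw [conjTranspose_submatrix, conjTranspose_one, one_submatrix_id_mul, mul_one_submatrix_id,
    submatrix_submatrix]
  rfl

lemma conjTranspose_one_submatrix_id_mul_self [DecidableEq n] [Semiring α] [StarRing α]
    {f : n → m} (hf : f.Injective) :
    ((1 : Matrix m m α).submatrix id f)ᴴ * (1 : Matrix m m α).submatrix id f = 1 := by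
  have h := conjTranspose_one_submatrix_id_mul_mul (1 : Matrix m m α) f
  rwa [Matrix.mul_one, submatrix_one f hf] at h

end Selection

section Compression

open scoped ComplexOrder

variable {𝕜 : Type*} [RCLike 𝕜] {m n : Type*} [Fintype m] [Fintype n]
  {A : Matrix m m 𝕜} {E : Matrix m n 𝕜}

lemma PosDef.eq_zero_of_conjTranspose_mul_mul_eq_zero (hA : A.PosDef) {B : Matrix m n 𝕜}
    (h : Bᴴ * A * B = 0) : B = 0 := by
  refine mulVec_injective (funext fun v => ?_)
  rw [zero_mulVec]
  by_contra hv
  have hpos := hA.dotProduct_mulVec_pos hv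
  simp only [star_mulVec, dotProduct_mulVec, vecMul_vecMul, h] at hpos
  simp at hpos

variable [DecidableEq n]

lemma mulVec_injective_of_conjTranspose_mul_self_eq_one (hE : Eᴴ * E = 1) :
    Function.Injective E.mulVec :=
  Function.LeftInverse.injective (g := (Eᴴ *ᵥ ·)) fun v => by simp [mulVec_mulVec, hE]

lemma PosDef.isUnit_det_conjTranspose_mul_mul (hA : A.PosDef) (hE : Eᴴ * E = 1) :
    IsUnit (Eᴴ * A * E).det :=
  (isUnit_iff_isUnit_det _).mp <|
    (hA.conjTranspose_mul_mul_same (mulVec_injective_of_conjTranspose_mul_self_eq_one hE)).isUnit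

variable [DecidableEq m]

lemma conjTranspose_mul_inv_mul_sub_inv_eq (hA : A.IsHermitian) (hAu : IsUnit A.det)
    (hE : Eᴴ * E = 1) (hP : IsUnit (Eᴴ * A * E).det) :
    Eᴴ * A⁻¹ * E - (Eᴴ * A * E)⁻¹ =
      (A⁻¹ * E - E * (Eᴴ * A * E)⁻¹)ᴴ * A * (A⁻¹ * E - E * (Eᴴ * A * E)⁻¹) := by
  set P := Eᴴ * A * E with hPdef
  have hPinv : (P⁻¹)ᴴ = P⁻¹ := (isHermitian_conjTranspose_mul_mul E hA).inv
  have hAB : A * (A⁻¹ * E - E * P⁻¹) = E - A * E * P⁻¹ := by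
    rw [Matrix.mul_sub, mul_nonsing_inv_cancel_left _ _ hAu, Matrix.mul_assoc]
  have h₁ : Eᴴ * A⁻¹ * (A * E * P⁻¹) = P⁻¹ := by
    rw [Matrix.mul_assoc, ← Matrix.mul_assoc A⁻¹, ← Matrix.mul_assoc A⁻¹, nonsing_inv_mul _ hAu,
      Matrix.one_mul, ← Matrix.mul_assoc, hE, Matrix.one_mul]
  have h₂ : P⁻¹ * Eᴴ * (A * E * P⁻¹) = P⁻¹ := by
    rw [Matrix.mul_assoc, ← Matrix.mul_assoc Eᴴ, ← Matrix.mul_assoc Eᴴ, ← hPdef,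
      nonsing_inv_mul_cancel_left _ _ hP]
  have h₃ : P⁻¹ * Eᴴ * E = P⁻¹ := by rw [Matrix.mul_assoc, hE, Matrix.mul_one]
  rw [Matrix.mul_assoc _ A, hAB, conjTranspose_sub, conjTranspose_mul, conjTranspose_mul, hA.inv,
    hPinv, Matrix.sub_mul, Matrix.mul_sub, Matrix.mul_sub, h₁, h₂, h₃]
  abel

lemma PosDef.posSemidef_conjTranspose_mul_inv_mul_sub_inv (hA : A.PosDef) (hE : Eᴴ * E = 1) :
    (Eᴴ * A⁻¹ * E - (Eᴴ * A * E)⁻¹).PosSemidef := by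
  rw [conjTranspose_mul_inv_mul_sub_inv_eq hA.1 ((isUnit_iff_isUnit_det _).mp hA.isUnit) hE
    (hA.isUnit_det_conjTranspose_mul_mul hE)]
  exact hA.posSemidef.conjTranspose_mul_mul_same _

lemma PosDef.mul_eq_mul_of_conjTranspose_mul_inv_mul_eq (hA : A.PosDef) (hE : Eᴴ * E = 1)
    (h : Eᴴ * A⁻¹ * E = (Eᴴ * A * E)⁻¹) : A * E = E * (Eᴴ * A * E) := by
  have hAu := (isUnit_iff_isUnit_det _).mp hA.isUnit
  have hP := hA.isUnit_det_conjTranspose_mul_mul hE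
  set P := Eᴴ * A * E
  have hB : A⁻¹ * E - E * P⁻¹ = 0 := hA.eq_zero_of_conjTranspose_mul_mul_eq_zero <| by
    rw [← conjTranspose_mul_inv_mul_sub_inv_eq hA.1 hAu hE hP, h, sub_self]
  calc A * E = A * (E * P⁻¹) * P := by
        rw [Matrix.mul_assoc, Matrix.mul_assoc, nonsing_inv_mul _ hP, Matrix.mul_one]
    _ = A * (A⁻¹ * E) * P := by rw [sub_eq_zero.mp hB]
    _ = E * P := by rw [mul_nonsing_inv_cancel_left _ _ hAu]

lemma PosDef.posSemidef_inv_submatrix_sub_submatrix_inv (hA : A.PosDef) {f : n → m}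
    (hf : f.Injective) : (A⁻¹.submatrix f f - (A.submatrix f f)⁻¹).PosSemidef := by
  simpa only [conjTranspose_one_submatrix_id_mul_mul] using
    hA.posSemidef_conjTranspose_mul_inv_mul_sub_inv (conjTranspose_one_submatrix_id_mul_self hf)

lemma PosDef.apply_eq_zero_of_inv_submatrix_eq (hA : A.PosDef) {f : n → m} (hf : f.Injective)
    (h : A⁻¹.submatrix f f = (A.submatrix f f)⁻¹) {i : m} (hi : i ∉ Set.range f) (k : n) :
    A i (f k) = 0 := by
  have hE := conjTranspose_one_submatrix_id_mul_self (α := 𝕜) hf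
  have hAE := congrFun₂ (hA.mul_eq_mul_of_conjTranspose_mul_inv_mul_eq hE
    (by simpa only [conjTranspose_one_submatrix_id_mul_mul] using h)) i k
  rw [mul_one_submatrix_id, conjTranspose_one_submatrix_id_mul_mul] at hAE
  exact hAE.trans <| Finset.sum_eq_zero fun j _ =>
    mul_eq_zero_of_left (one_apply_ne fun hj => hi ⟨j, hj.symm⟩) _

end Compression

lemma trace_inv_smul_one {K m : Type*} [Field K] [Fintype m] [DecidableEq m] (a : K) :
    ((a • (1 : Matrix m m K))⁻¹).trace = Fintype.card m / a := by
  rcases eq_or_ne a 0 with rfl | ha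
  · simp
  · rw [inv_eq_left_inv (B := a⁻¹ • 1) (by simp [smul_smul, ha])]
    simp [div_eq_inv_mul]

lemma natCast_mul_trace_sub_eq_sum_submatrix {R : Type*} [CommRing R] {n : ℕ}
    (B : Matrix (Fin (n + 1)) (Fin (n + 1)) R) (Q : Matrix (Fin n) (Fin n) R) :
    n * B.trace - (n + 1) * Q.trace =
      ∑ k : Fin n, (((n : R) - k) * (B.submatrix Fin.castSucc Fin.castSucc - Q) k k +
        ((k : R) + 1) * (B.submatrix Fin.succ Fin.succ - Q) k k) := by
  have h₁ : ∑ i : Fin (n + 1), ((n : R) - i) * B i i =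
      ∑ k : Fin n, ((n : R) - k) * B k.castSucc k.castSucc := by
    simp [Fin.sum_univ_castSucc]
  have h₂ : ∑ i : Fin (n + 1), (i : R) * B i i =
      ∑ k : Fin n, ((k : R) + 1) * B k.succ k.succ := by
    simp [Fin.sum_univ_succ]
  have hB : n * B.trace = ∑ k : Fin n, (((n : R) - k) * B k.castSucc k.castSucc +
      ((k : R) + 1) * B k.succ k.succ) := by
    rw [Finset.sum_add_distrib, ← h₁, ← h₂, ← Finset.sum_add_distrib, trace, Finset.mul_sum]
    exact Finset.sum_congr rfl fun i _ => by rw [diag_apply]; ring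
  have hQ : (n + 1) * Q.trace = ∑ k : Fin n, (((n : R) - k) + ((k : R) + 1)) * Q k k := by
    rw [trace, Finset.mul_sum]
    exact Finset.sum_congr rfl fun k _ => by rw [diag_apply]; ring
  rw [hB, hQ, ← Finset.sum_sub_distrib]
  exact Finset.sum_congr rfl fun k _ => by simp only [sub_apply, submatrix_apply]; ring

lemma PosDef.inv_submatrix_castSucc_eq_of_trace_eq {n : ℕ}
    {A : Matrix (Fin (n + 1)) (Fin (n + 1)) ℝ} (hA : A.PosDef)
    (hshift : A.submatrix Fin.succ Fin.succ = A.submatrix Fin.castSucc Fin.castSucc)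
    (h : n * A⁻¹.trace = (n + 1) * (A.submatrix Fin.castSucc Fin.castSucc)⁻¹.trace) :
    A⁻¹.submatrix Fin.castSucc Fin.castSucc = (A.submatrix Fin.castSucc Fin.castSucc)⁻¹ := by
  have h₁ := hA.posSemidef_inv_submatrix_sub_submatrix_inv (Fin.castSucc_injective n)
  have h₂ := hA.posSemidef_inv_submatrix_sub_submatrix_inv (Fin.succ_injective n)
  rw [hshift] at h₂
  have hsum := natCast_mul_trace_sub_eq_sum_submatrix A⁻¹
    (A.submatrix Fin.castSucc Fin.castSucc)⁻¹
  rw [h, sub_self, eq_comm, Finset.sum_eq_zero_iff_of_nonneg fun k _ =>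
    add_nonneg (mul_nonneg (by simp) h₁.diag_nonneg) (mul_nonneg (by positivity) h₂.diag_nonneg)]
    at hsum
  rw [← sub_eq_zero, ← h₁.trace_eq_zero_iff]
  refine Finset.sum_eq_zero fun k hk => ?_
  rw [diag_apply]
  have hnk : (0 : ℝ) < n - k := sub_pos.mpr (by exact_mod_cast k.isLt)
  nlinarith [hsum k hk, h₁.diag_nonneg (i := k), h₂.diag_nonneg (i := k)]

end Matrix

lemma toeplitz_eq_smul_one {c : ℕ → ℝ} {m : ℕ} (h : ∀ d, 0 < d → d < m → c d = 0) :
    toeplitz c m = c 0 • (1 : Matrix (Fin m) (Fin m) ℝ) := by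
  ext i j
  rcases eq_or_ne i j with rfl | hij
  · simp [toeplitz]
  · have hne : ((i : ℤ) - j).natAbs ≠ 0 := by omega
    simp [toeplitz, hij, h _ (Nat.pos_of_ne_zero hne) (by omega)]

/-- For a positive definite symmetric Toeplitz (n+1)×(n+1) matrix C_{n+1} with
upper-left block C_n, equality (1/n)tr(C_n⁻¹) = (1/(n+1))tr(C_{n+1}⁻¹) holds if and only if
C_{n+1} = c_0 · I, i.e. iff c_1 = ⋯ = c_n = 0. -/
theorem normalized_trace_inverse_eq_iff (n : ℕ) (hn : 0 < n) (c : ℕ → ℝ)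
    (hPD : (toeplitz c (n + 1)).PosDef) :
    (1 / (n : ℝ)) * ((toeplitz c n)⁻¹).trace =
        (1 / ((n : ℝ) + 1)) * ((toeplitz c (n + 1))⁻¹).trace ↔
      toeplitz c (n + 1) = c 0 • (1 : Matrix (Fin (n + 1)) (Fin (n + 1)) ℝ) := by
  have hn' : (n : ℝ) ≠ 0 := Nat.cast_ne_zero.mpr hn.ne'
  constructor
  · intro htrace
    have hinv := hPD.inv_submatrix_castSucc_eq_of_trace_eq
      (by rw [toeplitz_submatrix_succ, toeplitz_submatrix_castSucc])
      (by rw [toeplitz_submatrix_castSucc]; field_simp at htrace; linarith)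
    refine toeplitz_eq_smul_one fun d hd hdn => ?_
    have hlast := hPD.apply_eq_zero_of_inv_submatrix_eq (Fin.castSucc_injective n) hinv
      (i := Fin.last n) (by simp) ⟨n - d, by omega⟩
    have hdist : ((n : ℤ) - (n - d : ℕ)).natAbs = d := by omega
    simpa [toeplitz, hdist] using hlast
  · intro hA
    have hP : toeplitz c n = c 0 • 1 := by
      rw [← toeplitz_submatrix_castSucc, hA]
      exact congrArg (c 0 • ·) (submatrix_one (α := ℝ) _ (Fin.castSucc_injective n))
    rw [hA, hP, trace_inv_smul_one, trace_inv_smul_one, Fintype.card_fin, Fintype.card_fin]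
    field_simp
    push_cast
    ring
end

section
/- Let a_0 = 1, a_1, …, a_p be real numbers and σ² > 0, and let C_n (n ≥ p) be the covariance matrix of n consecutive samples of the stationary AR(p) process with these coefficients and innovation variance σ². Then for 1 ≤ i ≤ j ≤ n, σ²·[C_n⁻¹]_{i,j} = Σ_{ℓ=0}^{i−1} a_ℓ a_{ℓ+j−i} − Σ_{ℓ=n+1−j}^{n+i−j} a_ℓ a_{ℓ+j−i}, where a_ℓ := 0 for ℓ > p, and C_n⁻¹ is symmetric. -/
/-!
Extend `a` by zero and put `F k i = a (i - k)` (upper triangular Toeplitz), `E k i = a (k + n - i)`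
(nonzero only in the upper right corner) and `M = Fᵀ F - Eᵀ E`, whose entries are the right-hand
side of the formula. The rows of `C Fᵀ` and `C Eᵀ` are Yule–Walker sums cut off at the boundary of
the sample window, and for `i ≤ j` the two boundary errors in `(C M) j i` cancel, leaving
`σ² δᵢⱼ`. Yule–Walker says nothing at negative lags, so only this half of `C M` is computable:
`D = C M - σ² I` is strictly upper triangular, hence nilpotent, and `D C = C Dᵀ` by symmetry of
`C` and `M`. A nilpotent `D` with `D C = C Dᵀ` for positive definite `C` vanishes, so
`C⁻¹ = σ⁻² M`.
-/

open Matrix Finset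

namespace Matrix

variable {n R : Type*} [Fintype n]

theorem isNilpotent_of_isUpperTriangular [DecidableEq n] [CommRing R] [LinearOrder n]
    {D : Matrix n n R} (hD : D.IsUpperTriangular) (hdiag : ∀ i, D i i = 0) : IsNilpotent D :=
  ⟨Fintype.card n, by
    simpa [charpoly_of_isUpperTriangular D hD, hdiag] using D.aeval_self_charpoly⟩

variable [CommRing R] [PartialOrder R] [StarRing R]

theorem PosDef.eq_zero_of_mul_mul_conjTranspose_eq_zero {m : Type*} {C : Matrix n n R}
    (hC : C.PosDef) {A : Matrix m n R} (h : A * C * Aᴴ = 0) : A = 0 := by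
  ext r k
  suffices hrow : star (A r) = 0 by simpa using congrFun hrow k
  by_contra hne
  have hpos := hC.dotProduct_mulVec_pos hne
  have hrr : star (star (A r)) ⬝ᵥ (C *ᵥ star (A r)) = (A * C * Aᴴ) r r := by
    rw [star_star, dotProduct_mulVec]
    simp [Matrix.mul_apply, dotProduct, vecMul]
  rw [hrr, h] at hpos
  exact hpos.false

theorem PosDef.eq_zero_of_isNilpotent_of_mul_eq_mul_conjTranspose [DecidableEq n]
    {C D : Matrix n n R} (hC : C.PosDef) (hD : IsNilpotent D) (h : D * C = C * Dᴴ) : D = 0 := by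
  have hpow (k : ℕ) : D ^ k * C = C * Dᴴ ^ k := (SemiconjBy.pow_right h.symm k).symm
  -- `D ^ (k + 2) = 0` gives `D ^ (k + 1) * C * (D ^ (k + 1))ᴴ = C * (D ^ (2 * k + 2))ᴴ = 0`.
  have hdescend (k : ℕ) (hk : D ^ (k + 2) = 0) : D ^ (k + 1) = 0 := by
    refine hC.eq_zero_of_mul_mul_conjTranspose_eq_zero ?_
    rw [hpow, conjTranspose_pow, Matrix.mul_assoc, ← pow_add,
      show k + 1 + (k + 1) = k + 2 + k by omega, pow_add, ← conjTranspose_pow, hk,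
      conjTranspose_zero, Matrix.zero_mul, Matrix.mul_zero]
  obtain ⟨k, hk⟩ := hD
  have hk1 : D ^ (k + 1) = 0 := by rw [pow_succ, hk, Matrix.zero_mul]
  clear hk
  induction k with
  | zero => simpa using hk1
  | succ k ih => exact ih (hdescend k hk1)

theorem PosDef.mul_eq_smul_one_of_apply_of_le [DecidableEq n] [LinearOrder n]
    {C M : Matrix n n R} (hC : C.PosDef) (hM : M.IsHermitian) {σ : R} (hσ : IsSelfAdjoint σ)
    (h : ∀ i j, i ≤ j → (C * M) j i = (σ • (1 : Matrix n n R)) j i) : C * M = σ • 1 := by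
  set D := C * M - σ • 1 with hD
  have hDupper : D.IsUpperTriangular := fun i j hji => by
    rw [hD, sub_apply, h j i hji.le, sub_self]
  have hDdiag (i : n) : D i i = 0 := by rw [hD, sub_apply, h i i le_rfl, sub_self]
  have hDC : D * C = C * Dᴴ := by
    rw [hD, conjTranspose_sub, conjTranspose_mul, hM.eq, hC.isHermitian.eq, conjTranspose_smul,
      conjTranspose_one, hσ.star_eq, Matrix.sub_mul, Matrix.mul_sub, Matrix.mul_assoc,
      smul_mul_assoc, mul_smul_comm, Matrix.one_mul, Matrix.mul_one]
  exact sub_eq_zero.mp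
    (hC.eq_zero_of_isNilpotent_of_mul_eq_mul_conjTranspose
      (isNilpotent_of_isUpperTriangular hDupper hDdiag) hDC)

end Matrix

def YuleWalker (p : ℕ) (a c : ℕ → ℝ) (σ2 : ℝ) : Prop :=
  ∀ k : ℕ, ∑ ℓ ∈ range (p + 1), a ℓ * c ((k : ℤ) - (ℓ : ℤ)).natAbs = if k = 0 then σ2 else 0

theorem YuleWalker.sum_range_eq {p : ℕ} {a c : ℕ → ℝ} {σ2 : ℝ} (hYW : YuleWalker p a c σ2)
    (hap : ∀ ℓ, p < ℓ → a ℓ = 0) {N : ℕ} (hN : p < N) (k : ℕ) :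
    ∑ ℓ ∈ range N, a ℓ * c ((k : ℤ) - (ℓ : ℤ)).natAbs = if k = 0 then σ2 else 0 := by
  rw [eventually_constant_sum (fun ℓ hℓ => by rw [hap ℓ hℓ, zero_mul]) hN, hYW k]

def arUpper (a : ℕ → ℝ) (n : ℕ) : Matrix (Fin n) (Fin n) ℝ :=
  of fun k i => if (k : ℕ) ≤ i then a (i - k) else 0

def arCorner (a : ℕ → ℝ) (n : ℕ) : Matrix (Fin n) (Fin n) ℝ :=
  of fun k i => a (k + n - i)

def arPrecision (a : ℕ → ℝ) (n : ℕ) : Matrix (Fin n) (Fin n) ℝ :=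
  (arUpper a n)ᵀ * arUpper a n - (arCorner a n)ᵀ * arCorner a n

section

variable {a : ℕ → ℝ} {n : ℕ}

theorem arPrecision_isHermitian : (arPrecision a n).IsHermitian := by
  simp [arPrecision, IsHermitian, Matrix.transpose_sub, Matrix.transpose_mul]

theorem arUpper_transpose_mul_self_apply {i j : Fin n} (hij : (i : ℕ) ≤ j) :
    ((arUpper a n)ᵀ * arUpper a n) i j = ∑ ℓ ∈ range (i + 1), a ℓ * a (ℓ + j - i) := by
  calc ((arUpper a n)ᵀ * arUpper a n) i j
      = ∑ k ∈ range n, (if k ≤ i then a (i - k) else 0) * (if k ≤ j then a (j - k) else 0) := by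
        rw [sum_range]; rfl
    _ = ∑ k ∈ range (i + 1), a (i - k) * a (j - k) := by
        rw [eventually_constant_sum (N := i + 1) (fun k hk => by rw [if_neg (by omega), zero_mul])
          (by omega)]
        exact sum_congr rfl fun k hk => by
          simp only [mem_range] at hk
          rw [if_pos (by omega), if_pos (by omega)]
    _ = ∑ ℓ ∈ range (i + 1), a ℓ * a (ℓ + j - i) := by
        rw [← sum_range_reflect]
        exact sum_congr rfl fun k hk => by
          simp only [mem_range] at hk
          rw [show (i : ℕ) - (i + 1 - 1 - k) = k by omega,
            show (j : ℕ) - (i + 1 - 1 - k) = k + j - i by omega]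

theorem arCorner_transpose_mul_self_apply {p : ℕ} (hpn : p ≤ n) (hap : ∀ ℓ, p < ℓ → a ℓ = 0)
    {i j : Fin n} (hij : (i : ℕ) ≤ j) :
    ((arCorner a n)ᵀ * arCorner a n) i j =
      ∑ ℓ ∈ Icc (n - j) (n - j + i), a ℓ * a (ℓ + j - i) := by
  calc ((arCorner a n)ᵀ * arCorner a n) i j
      = ∑ k ∈ range n, a (k + n - i) * a (k + n - j) := by
        rw [sum_range]; rfl
    _ = ∑ k ∈ range (i + 1), a (k + n - i) * a (k + n - j) :=
        eventually_constant_sum (N := i + 1) (fun k hk => by rw [hap _ (by omega), zero_mul])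
          (by omega)
    _ = ∑ ℓ ∈ Icc (n - j) (n - j + i), a ℓ * a (ℓ + j - i) := by
        rw [← Ico_add_one_right_eq_Icc, sum_Ico_eq_sum_range,
          show n - j + i + 1 - (n - j) = i + 1 by omega]
        exact sum_congr rfl fun k hk => by
          simp only [mem_range] at hk
          rw [mul_comm, show n - j + k = k + n - j by omega,
            show k + n - j + j - i = k + n - i by omega]

theorem arPrecision_apply {p : ℕ} (hpn : p ≤ n) (hap : ∀ ℓ, p < ℓ → a ℓ = 0)
    {i j : Fin n} (hij : (i : ℕ) ≤ j) :
    arPrecision a n i j = (∑ ℓ ∈ range (i + 1), a ℓ * a (ℓ + j - i)) -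
      ∑ ℓ ∈ Icc (n - j) (n - j + i), a ℓ * a (ℓ + j - i) := by
  rw [arPrecision, Matrix.sub_apply, arUpper_transpose_mul_self_apply hij,
    arCorner_transpose_mul_self_apply hpn hap hij]

end

section

variable {p n : ℕ} {a c : ℕ → ℝ} {σ2 : ℝ}

theorem toeplitz_mul_arUpper_transpose_apply (hYW : YuleWalker p a c σ2)
    (hap : ∀ ℓ, p < ℓ → a ℓ = 0) (hpn : p ≤ n) {j k : Fin n} (hkj : (k : ℕ) ≤ j) :
    (toeplitz c n * (arUpper a n)ᵀ) j k = (if (k : ℕ) = j then σ2 else 0) -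
      ∑ ℓ ∈ Ico (n - k) (n + 1), a ℓ * c (((j - k : ℕ) : ℤ) - ℓ).natAbs := by
  have hkn : (k : ℕ) ≤ n := k.isLt.le
  have hhead : (toeplitz c n * (arUpper a n)ᵀ) j k =
      ∑ ℓ ∈ range (n - k), a ℓ * c (((j - k : ℕ) : ℤ) - ℓ).natAbs := by
    calc (toeplitz c n * (arUpper a n)ᵀ) j k
        = ∑ m ∈ range n, c ((j : ℤ) - m).natAbs * (if k ≤ m then a (m - k) else 0) := by
          rw [sum_range]; rfl
      _ = ∑ m ∈ Ico (k : ℕ) n, c ((j : ℤ) - m).natAbs * a (m - k) := by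
          rw [range_eq_Ico, ← sum_Ico_consecutive _ (Nat.zero_le k) hkn,
            sum_eq_zero fun m hm => by rw [if_neg (by simp only [mem_Ico] at hm; omega), mul_zero],
            zero_add]
          exact sum_congr rfl fun m hm => by rw [if_pos (mem_Ico.mp hm).1]
      _ = ∑ ℓ ∈ range (n - k), a ℓ * c (((j - k : ℕ) : ℤ) - ℓ).natAbs := by
          rw [sum_Ico_eq_sum_range]
          exact sum_congr rfl fun ℓ _ => by
            rw [mul_comm, Nat.add_sub_cancel_left]
            congr 2
            omega
  rw [hhead, eq_sub_iff_add_eq, sum_range_add_sum_Ico _ (by omega),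
    hYW.sum_range_eq hap (by omega)]
  exact if_congr (by omega) rfl rfl

theorem toeplitz_mul_arCorner_transpose_apply (hYW : YuleWalker p a c σ2)
    (hap : ∀ ℓ, p < ℓ → a ℓ = 0) (hpn : p ≤ n) (j k : Fin n) :
    (toeplitz c n * (arCorner a n)ᵀ) j k =
      -∑ ℓ ∈ range (k + 1), a ℓ * c (((k + n - j : ℕ) : ℤ) - ℓ).natAbs := by
  set s := (k : ℕ) + n - j
  have hsum := hYW.sum_range_eq hap (N := k + n + 1) (by omega) s
  rw [if_neg (by omega), ← sum_range_add_sum_Ico _ (show (k : ℕ) + 1 ≤ k + n + 1 by omega)]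
    at hsum
  rw [eq_neg_iff_add_eq_zero, add_comm, ← hsum]
  congr 1
  calc (toeplitz c n * (arCorner a n)ᵀ) j k
      = ∑ m ∈ range n, c ((j : ℤ) - m).natAbs * a (k + n - m) := by
        rw [sum_range]; rfl
    _ = ∑ m ∈ Ico 0 n, a (k + n - m) * c ((s : ℤ) - (k + n - m : ℕ)).natAbs := by
        rw [range_eq_Ico]
        exact sum_congr rfl fun m hm => by
          simp only [mem_Ico] at hm
          rw [mul_comm]
          congr 2
          omega
    _ = ∑ ℓ ∈ Ico ((k : ℕ) + 1) (k + n + 1), a ℓ * c ((s : ℤ) - ℓ).natAbs := by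
        rw [sum_Ico_reflect (fun ℓ => a ℓ * c ((s : ℤ) - ℓ).natAbs) 0 (n := k + n) (by omega),
          show k + n + 1 - n = k + 1 by omega, Nat.sub_zero]

/-- The substitution `(k, ℓ) ↦ (ℓ + i - n, i - k)` matches the two sides term by term. -/
theorem sum_tail_mul_eq_sum_head_mul {i j : ℕ} (hij : i ≤ j) (hjn : j < n) :
    ∑ k ∈ range (i + 1),
        (∑ ℓ ∈ Ico (n - k) (n + 1), a ℓ * c (((j - k : ℕ) : ℤ) - ℓ).natAbs) * a (i - k) =
      ∑ k ∈ range (i + 1),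
        (∑ ℓ ∈ range (k + 1), a ℓ * c (((k + n - j : ℕ) : ℤ) - ℓ).natAbs) * a (k + n - i) := by
  simp only [sum_mul]
  rw [sum_sigma', sum_sigma']
  apply sum_nbij' (fun x => ⟨x.2 + i - n, i - x.1⟩) (fun x => ⟨i - x.2, x.1 + n - i⟩)
  all_goals
    rintro ⟨k, ℓ⟩ hx
    simp only [mem_sigma, mem_range, mem_Ico] at hx ⊢
  · omega
  · omega
  · simp only [Sigma.mk.injEq, heq_eq_eq]
    omega
  · simp only [Sigma.mk.injEq, heq_eq_eq]
    omega
  · have hlag : (((j - k : ℕ) : ℤ) - ℓ).natAbs =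
        (((ℓ + i - n + n - j : ℕ) : ℤ) - (i - k : ℕ)).natAbs := by omega
    rw [show ℓ + i - n + n - i = ℓ by omega, hlag]
    ring

theorem toeplitz_mul_arPrecision_apply_of_le (hYW : YuleWalker p a c σ2)
    (hap : ∀ ℓ, p < ℓ → a ℓ = 0) (ha0 : a 0 = 1) (hpn : p ≤ n) {i j : Fin n}
    (hij : (i : ℕ) ≤ j) :
    (toeplitz c n * arPrecision a n) j i = (σ2 • (1 : Matrix (Fin n) (Fin n) ℝ)) j i := by
  set tail : ℕ → ℝ := fun k => ∑ ℓ ∈ Ico (n - k) (n + 1), a ℓ * c (((j - k : ℕ) : ℤ) - ℓ).natAbs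
  set head : ℕ → ℝ := fun k => ∑ ℓ ∈ range (k + 1), a ℓ * c (((k + n - j : ℕ) : ℤ) - ℓ).natAbs
  have hupper : (toeplitz c n * (arUpper a n)ᵀ * arUpper a n) j i =
      ∑ k ∈ range (i + 1), ((if k = j then σ2 else 0) - tail k) * a (i - k) := by
    calc (toeplitz c n * (arUpper a n)ᵀ * arUpper a n) j i
        = ∑ k ∈ range n,
            if k ≤ i then ((if k = j then σ2 else 0) - tail k) * a (i - k) else 0 := by
          rw [mul_apply, sum_range]
          refine sum_congr rfl fun k _ => ?_
          by_cases hki : (k : ℕ) ≤ i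
          · rw [if_pos hki, toeplitz_mul_arUpper_transpose_apply hYW hap hpn (hki.trans hij)]
            simp only [arUpper, of_apply, if_pos hki, tail]
          · simp only [arUpper, of_apply, if_neg hki, mul_zero]
      _ = _ := by
          rw [eventually_constant_sum (N := i + 1) (fun k hk => if_neg (by omega)) (by omega)]
          exact sum_congr rfl fun k hk => if_pos (by simp only [mem_range] at hk; omega)
  have hcorner : (toeplitz c n * (arCorner a n)ᵀ * arCorner a n) j i =
      -∑ k ∈ range (i + 1), head k * a (k + n - i) := by
    calc (toeplitz c n * (arCorner a n)ᵀ * arCorner a n) j i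
        = -∑ k ∈ range n, head k * a (k + n - i) := by
          rw [mul_apply, sum_range, ← sum_neg_distrib]
          refine sum_congr rfl fun k _ => ?_
          rw [toeplitz_mul_arCorner_transpose_apply hYW hap hpn, neg_mul]
          rfl
      _ = _ := by
          rw [eventually_constant_sum (N := i + 1)
            (fun k hk => by rw [hap _ (by omega), mul_zero]) (by omega)]
  rw [arPrecision, Matrix.mul_sub, ← Matrix.mul_assoc, ← Matrix.mul_assoc, Matrix.sub_apply,
    hupper, hcorner, sub_neg_eq_add]
  simp only [sub_mul, sum_sub_distrib, tail, head,
    sum_tail_mul_eq_sum_head_mul hij j.isLt, sub_add_cancel, ite_mul, zero_mul, sum_ite_eq',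
    mem_range, Matrix.smul_apply, one_apply, smul_eq_mul, Fin.ext_iff]
  split_ifs with hlt heq heq
  · rw [heq, Nat.sub_self, ha0]
  · omega
  · omega
  · rw [mul_zero]

end

theorem ar_inverse_covariance_general (p n : ℕ) (hpn : p ≤ n)
    (a : ℕ → ℝ) (σ2 : ℝ) (hσ : 0 < σ2) (ha0 : a 0 = 1) (hap : ∀ ℓ, p < ℓ → a ℓ = 0)
    (c : ℕ → ℝ)
    (hYW : ∀ k : ℕ, ∑ ℓ ∈ Finset.range (p + 1), a ℓ * c ((k : ℤ) - (ℓ : ℤ)).natAbs =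
      if k = 0 then σ2 else 0)
    (hPD : (toeplitz c n).PosDef) :
    (∀ i j : Fin n, (i : ℕ) ≤ (j : ℕ) →
      σ2 * (toeplitz c n)⁻¹ i j =
        (∑ ℓ ∈ Finset.range ((i : ℕ) + 1), a ℓ * a (ℓ + (j : ℕ) - (i : ℕ))) -
          ∑ ℓ ∈ Finset.Icc (n - (j : ℕ)) (n - (j : ℕ) + (i : ℕ)),
            a ℓ * a (ℓ + (j : ℕ) - (i : ℕ))) ∧
    ∀ i j : Fin n, (toeplitz c n)⁻¹ j i = (toeplitz c n)⁻¹ i j := by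
  have hCM : toeplitz c n * arPrecision a n = σ2 • 1 :=
    hPD.mul_eq_smul_one_of_apply_of_le arPrecision_isHermitian (IsSelfAdjoint.all σ2)
      fun i j hij => toeplitz_mul_arPrecision_apply_of_le hYW hap ha0 hpn hij
  have hinv : (toeplitz c n)⁻¹ = σ2⁻¹ • arPrecision a n :=
    inv_eq_right_inv (by rw [mul_smul_comm, hCM, smul_smul, inv_mul_cancel₀ hσ.ne', one_smul])
  refine ⟨fun i j hij => ?_, fun i j => ?_⟩
  · rw [hinv, Matrix.smul_apply, smul_eq_mul, ← mul_assoc, mul_inv_cancel₀ hσ.ne', one_mul,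
      arPrecision_apply hpn hap hij]
  · rw [hinv, Matrix.smul_apply, Matrix.smul_apply, ← arPrecision_isHermitian.apply i j,
      star_trivial]

/-- for a stationary AR(p) process with coefficients a_0 = 1, a_1, …, a_p
(a_ℓ = 0 for ℓ > p) and innovation variance σ² — whose covariance sequence c is
characterized by the Yule–Walker relations Σ_ℓ a_ℓ c_{k−ℓ} = σ²·δ_{k,0} — the inverse of
the covariance matrix C_n of n ≥ p consecutive samples is given explicitly (0-based
indices i ≤ j, corresponding to the paper's 1-based formula) by
σ²·[C_n⁻¹]_{i,j} = Σ_{ℓ=0}^{i} a_ℓ a_{ℓ+j−i} − Σ_{ℓ=n−j}^{n−j+i} a_ℓ a_{ℓ+j−i},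
and C_n⁻¹ is symmetric. -/
theorem ar_inverse_covariance (p n : ℕ) (hpn : p ≤ n) (hn : 0 < n)
    (a : ℕ → ℝ) (σ2 : ℝ) (hσ : 0 < σ2) (ha0 : a 0 = 1) (hap : ∀ ℓ, p < ℓ → a ℓ = 0)
    (c : ℕ → ℝ)
    (hYW : ∀ k : ℕ, ∑ ℓ ∈ Finset.range (p + 1), a ℓ * c ((k : ℤ) - (ℓ : ℤ)).natAbs =
      if k = 0 then σ2 else 0)
    (hPD : (toeplitz c n).PosDef) :
    (∀ i j : Fin n, (i : ℕ) ≤ (j : ℕ) →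
      σ2 * (toeplitz c n)⁻¹ i j =
        (∑ ℓ ∈ Finset.range ((i : ℕ) + 1), a ℓ * a (ℓ + (j : ℕ) - (i : ℕ))) -
          ∑ ℓ ∈ Finset.Icc (n - (j : ℕ)) (n - (j : ℕ) + (i : ℕ)),
            a ℓ * a (ℓ + (j : ℕ) - (i : ℕ))) ∧
    ∀ i j : Fin n, (toeplitz c n)⁻¹ j i = (toeplitz c n)⁻¹ i j :=
  ar_inverse_covariance_general p n hpn a σ2 hσ ha0 hap c hYW hPD
end

section
/- Let a_0 = 1, a_1, …, a_p be AR(p) coefficients with innovation variance σ², and C_n (n ≥ p) the covariance of n consecutive samples. Then the normalized trace-inverse satisfies M_n = (1/n)tr(C_n⁻¹) = (1/σ²)·Σ_{ℓ=0}^{n} (1 − 2ℓ/n)·a_ℓ², with a_ℓ := 0 for ℓ > p. -/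
/-!
With `L` the lower triangular Toeplitz matrix with first column `a₀, …, a_{n-1}` and `U` the
matrix `U i j = a_{n-i+j}`, the Gohberg–Semencul formula reads `σ² C_n⁻¹ = L Lᵀ - U Uᵀ`.
Both Gram matrices are truncations of the full autocorrelation `ρ` of the coefficients, which is
invariant under `(x, y) ↦ (c - x, c - y)`; hence `L Lᵀ - U Uᵀ` is persymmetric and, extended to
columns `k ≥ n`, vanishes there. The Yule–Walker equations then show that `(L Lᵀ - U Uᵀ) C_n` agrees
with `σ² I` on and above the diagonal, and persymmetry of both factors gives the rest.
Finally `tr (L Lᵀ) = n ρ(0) - tr (U Uᵀ)` and `tr (U Uᵀ) = ∑ ℓ ℓ a_ℓ²`.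
-/

open Matrix Finset

open Function

lemma finsum_eq_sum_range {M : Type*} [AddCommMonoid M] {f : ℤ → M} {N : ℕ}
    (hf : support f ⊆ Set.Ico 0 N) : ∑ᶠ t, f t = ∑ m ∈ range N, f m := by
  rw [finsum_eq_sum_of_support_subset f (s := (range N).map Nat.castEmbedding), sum_map]
  · rfl
  intro t ht
  obtain ⟨h0, hN⟩ := hf ht
  simp only [coe_map, coe_range, Set.mem_image, Set.mem_Iio, Nat.castEmbedding_apply]
  exact ⟨t.toNat, by omega, by omega⟩

lemma finsum_eq_sum_range_add_sum_range_neg {M : Type*} [AddCommMonoid M] {f : ℤ → M} {N : ℕ}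
    (hf : support f ⊆ Set.Ico (-N) N) :
    ∑ᶠ t, f t = ∑ m ∈ range N, f m + ∑ m ∈ range N, f (-(m + 1)) := by
  rw [← finsum_comp_equiv (Equiv.subRight (N : ℤ)), finsum_eq_sum_range (N := N + N),
    sum_range_add, add_comm, ← sum_range_reflect (fun u => f (Equiv.subRight (N : ℤ) u)) N]
  · congr 1 <;> refine sum_congr rfl fun m hm => congrArg f ?_
    · simp
    · have := mem_range.mp hm
      simp only [Equiv.subRight_apply]
      omega
  · intro u hu
    have := hf hu
    simp only [Equiv.subRight_apply, Set.mem_Ico] at this ⊢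
    omega

section Autocorrelation

variable (h : ℤ → ℝ) (n : ℕ)

noncomputable def autocorr (x y : ℤ) : ℝ := ∑ᶠ t, h (x - t) * h (y - t)

def lowerCorr (x y : ℤ) : ℝ := ∑ ℓ ∈ range n, h (x - ℓ) * h (y - ℓ)

def upperCorr (x y : ℤ) : ℝ := ∑ ℓ ∈ range n, h (x + ℓ + 1) * h (y + ℓ + 1)

/-- `lowerCorr h n x y` and `upperCorr h n (n - 1 - x) (n - 1 - y)` are the entries of `L Lᵀ` and
`U Uᵀ` at `(x, y)`, here for all `x y : ℤ`. -/
def gsKernel (x y : ℤ) : ℝ := lowerCorr h n x y - upperCorr h n (n - 1 - x) (n - 1 - y)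

lemma autocorr_sub_sub (c x y : ℤ) : autocorr h (c - x) (c - y) = autocorr h x y := by
  rw [autocorr, ← finsum_comp_equiv (Equiv.addLeft (c - x - y)), autocorr]
  refine finsum_congr fun t => ?_
  rw [mul_comm]
  congr 2 <;> simp only [Equiv.coe_addLeft] <;> ring

variable {h n}

lemma eq_zero_of_support_subset (hh : support h ⊆ Set.Icc 0 n) {t : ℤ} (ht : t < 0 ∨ n < t) :
    h t = 0 :=
  notMem_support.mp fun hne => by have := hh hne; simp only [Set.mem_Icc] at this; omega

lemma lowerCorr_add_upperCorr (hh : support h ⊆ Set.Icc 0 n) {x : ℤ} (hx0 : 0 ≤ x) (hxn : x < n)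
    (y : ℤ) : lowerCorr h n x y + upperCorr h n x y = autocorr h x y := by
  rw [autocorr, finsum_eq_sum_range_add_sum_range_neg (N := n)]
  · simp only [lowerCorr, upperCorr, sub_neg_eq_add, add_assoc]
  · intro t ht
    have := hh (left_ne_zero_of_mul ht)
    simp only [Set.mem_Icc, Set.mem_Ico] at this ⊢
    omega

lemma lowerCorr_eq_zero (hh : support h ⊆ Set.Icc 0 n) (x : ℤ) {y : ℤ} (hy : y < 0) :
    lowerCorr h n x y = 0 :=
  sum_eq_zero fun ℓ _ => by rw [eq_zero_of_support_subset hh (t := y - ℓ) (by omega), mul_zero]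

lemma upperCorr_eq_zero (hh : support h ⊆ Set.Icc 0 n) (x : ℤ) {y : ℤ} (hy : n ≤ y) :
    upperCorr h n x y = 0 :=
  sum_eq_zero fun ℓ _ => by rw [eq_zero_of_support_subset hh (t := y + ℓ + 1) (by omega), mul_zero]

lemma gsKernel_eq_zero (hh : support h ⊆ Set.Icc 0 n) {x y : ℤ} (hx0 : 0 ≤ x) (hxn : x < n)
    (hy : n ≤ y) : gsKernel h n x y = 0 := by
  have hlow := lowerCorr_add_upperCorr hh hx0 hxn y
  have hup := lowerCorr_add_upperCorr hh (x := n - 1 - x) (by omega) (by omega) (n - 1 - y)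
  rw [upperCorr_eq_zero hh x hy, add_zero] at hlow
  rw [lowerCorr_eq_zero hh _ (by omega), zero_add, autocorr_sub_sub] at hup
  rw [gsKernel, hlow, hup, sub_self]

lemma gsKernel_sub_sub (hh : support h ⊆ Set.Icc 0 n) {x : ℤ} (hx0 : 0 ≤ x) (hxn : x < n)
    (y : ℤ) : gsKernel h n (n - 1 - x) (n - 1 - y) = gsKernel h n x y := by
  have hx := lowerCorr_add_upperCorr hh hx0 hxn y
  have hx' := lowerCorr_add_upperCorr hh (x := n - 1 - x) (by omega) (by omega) (n - 1 - y)
  rw [autocorr_sub_sub] at hx'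
  simp only [gsKernel, sub_sub_cancel]
  linarith

end Autocorrelation

section YuleWalker

variable {h : ℤ → ℝ} {n : ℕ} (c : ℕ → ℝ)

lemma sum_range_mul_natAbs_eq_finsum_sub (hh : support h ⊆ Set.Icc 0 n) {ℓ : ℕ} (hℓ : ℓ < n)
    (j : ℤ) : ∑ k ∈ range (n + n), h (k - ℓ) * c ((k : ℤ) - j).natAbs =
      ∑ᶠ m, h m * c ((j - ℓ) - m).natAbs := by
  rw [← finsum_comp_equiv (Equiv.subRight (ℓ : ℤ)), finsum_eq_sum_range]
  · refine sum_congr rfl fun k _ => ?_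
    rw [Equiv.subRight_apply, ← Int.natAbs_neg (j - ℓ - _)]
    congr 3
    ring
  · intro k hk
    have := hh (left_ne_zero_of_mul hk)
    simp only [Equiv.subRight_apply, Set.mem_Icc, Set.mem_Ico] at this ⊢
    omega

lemma sum_range_reflect_mul_natAbs_eq_finsum_sub (hh : support h ⊆ Set.Icc 0 n) {ℓ : ℕ}
    (hℓ : ℓ < n) (j : ℤ) :
    ∑ k ∈ range (n + n), h (n - 1 - k + ℓ + 1) * c ((k : ℤ) - j).natAbs =
      ∑ᶠ m, h m * c ((n + ℓ - j) - m).natAbs := by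
  rw [← finsum_comp_equiv (Equiv.subLeft ((n + ℓ : ℕ) : ℤ)), finsum_eq_sum_range]
  · refine sum_congr rfl fun k _ => ?_
    simp only [Equiv.subLeft_apply]
    congr 1
    · congr 1; push_cast; ring
    · congr 2; push_cast; ring
  · intro k hk
    have := hh (left_ne_zero_of_mul hk)
    simp only [Equiv.subLeft_apply, Set.mem_Icc, Set.mem_Ico] at this ⊢
    omega

variable {c} {σ2 : ℝ}

lemma sum_gsKernel_mul_of_le (hh : support h ⊆ Set.Icc 0 n) (hh0 : h 0 = 1)
    (hYW : ∀ t : ℤ, 0 ≤ t → ∑ᶠ m, h m * c (t - m).natAbs = if t = 0 then σ2 else 0)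
    {i j : ℕ} (hij : i ≤ j) (hj : j < n) :
    ∑ k ∈ range n, gsKernel h n i k * c ((k : ℤ) - j).natAbs = if i = j then σ2 else 0 := by
  have hwindow : ∑ k ∈ range n, gsKernel h n i k * c ((k : ℤ) - j).natAbs =
      ∑ k ∈ range (n + n), gsKernel h n i k * c ((k : ℤ) - j).natAbs := by
    rw [sum_range_add, left_eq_add]
    refine sum_eq_zero fun k _ => ?_
    rw [gsKernel_eq_zero hh (by omega) (by omega) (by push_cast; omega), zero_mul]
  have hexpand : ∑ k ∈ range (n + n), gsKernel h n i k * c ((k : ℤ) - j).natAbs =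
      ∑ ℓ ∈ range n,
        (h (i - ℓ) * ∑ k ∈ range (n + n), h (k - ℓ) * c ((k : ℤ) - j).natAbs -
          h (n - 1 - i + ℓ + 1) *
            ∑ k ∈ range (n + n), h (n - 1 - k + ℓ + 1) * c ((k : ℤ) - j).natAbs) := by
    simp only [gsKernel, lowerCorr, upperCorr, ← sum_sub_distrib, sum_mul, mul_sum]
    rw [sum_comm]
    refine sum_congr rfl fun ℓ _ => sum_congr rfl fun k _ => by ring
  rw [hwindow, hexpand]
  calc _ = ∑ ℓ ∈ range n, if ℓ = j then (if i = j then σ2 else 0) else 0 := by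
        refine sum_congr rfl fun ℓ hℓ => ?_
        have hℓ := mem_range.mp hℓ
        rw [sum_range_mul_natAbs_eq_finsum_sub c hh hℓ,
          sum_range_reflect_mul_natAbs_eq_finsum_sub c hh hℓ, hYW (n + ℓ - j) (by omega),
          if_neg (by omega), mul_zero, sub_zero]
        by_cases hℓi : ℓ ≤ i
        · rw [hYW (j - ℓ) (by omega)]
          by_cases hℓj : ℓ = j
          · subst hℓj
            rw [if_pos (by omega), if_pos rfl, if_pos (by omega), show (i : ℤ) - ℓ = 0 by omega,
              hh0, one_mul]
          · rw [if_neg (by omega), if_neg hℓj, mul_zero]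
        · rw [eq_zero_of_support_subset hh (t := i - ℓ) (by omega), zero_mul,
            ite_eq_right_iff.mpr fun hℓj => if_neg (by omega)]
    _ = _ := by rw [sum_ite_eq', if_pos (mem_range.mpr hj)]

end YuleWalker

lemma Matrix.eq_smul_one_of_submatrix_rev {R : Type*} [Semiring R] {n : ℕ}
    {M : Matrix (Fin n) (Fin n) R} {s : R} (hM : M.submatrix Fin.rev Fin.rev = M)
    (hupper : ∀ i j, i ≤ j → M i j = (s • (1 : Matrix (Fin n) (Fin n) R)) i j) :
    M = s • 1 := by
  ext i j
  rcases le_total i j with hij | hij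
  · exact hupper i j hij
  · rw [← hM, submatrix_apply, hupper _ _ (Fin.rev_le_rev.mpr hij)]
    simp only [Matrix.smul_apply, one_apply, Fin.rev_inj]

lemma toeplitz_submatrix_rev (c : ℕ → ℝ) (n : ℕ) :
    (toeplitz c n).submatrix Fin.rev Fin.rev = toeplitz c n := by
  ext i j
  simp only [toeplitz, submatrix_apply, of_apply, Fin.val_rev]
  rw [← Int.natAbs_neg]
  congr 2
  omega

lemma sum_range_sum_range_add_add_one {G : ℕ → ℝ} {n : ℕ} (hG : ∀ m, n < m → G m = 0) :
    ∑ i ∈ range n, ∑ s ∈ range n, G (i + s + 1) = ∑ m ∈ range (n + 1), (m : ℝ) * G m := by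
  calc _ = ∑ i ∈ range n, ∑ m ∈ Ico (i + 1) (n + 1), G m := by
        refine sum_congr rfl fun i hi => ?_
        rw [sum_Ico_eq_sum_range, show n + 1 - (i + 1) = n - i by omega]
        refine (sum_subset (range_subset_range.mpr (Nat.sub_le n i)) fun s hs hs' => ?_).symm.trans
          (sum_congr rfl fun s _ => by rw [add_right_comm])
        simp only [mem_range, not_lt] at hs hs'
        exact hG _ (by omega)
    _ = ∑ m ∈ range (n + 1), ∑ _i ∈ range m, G m :=
        sum_comm' fun i m => by simp only [mem_range, mem_Ico]; omega
    _ = _ := by simp only [sum_const, card_range, nsmul_eq_mul]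

section GohbergSemencul

variable {h : ℤ → ℝ} {n : ℕ}

variable (h n) in
def gsMatrix : Matrix (Fin n) (Fin n) ℝ := of fun i j => gsKernel h n i j

lemma gsMatrix_submatrix_rev (hh : support h ⊆ Set.Icc 0 n) :
    (gsMatrix h n).submatrix Fin.rev Fin.rev = gsMatrix h n := by
  ext i j
  have hrev (k : Fin n) : ((Fin.rev k : ℕ) : ℤ) = n - 1 - k := by rw [Fin.val_rev]; omega
  simp only [gsMatrix, submatrix_apply, of_apply, hrev]
  exact gsKernel_sub_sub hh (by omega) (by omega) _

lemma gsMatrix_mul_toeplitz {c : ℕ → ℝ} {σ2 : ℝ} (hh : support h ⊆ Set.Icc 0 n) (hh0 : h 0 = 1)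
    (hYW : ∀ t : ℤ, 0 ≤ t → ∑ᶠ m, h m * c (t - m).natAbs = if t = 0 then σ2 else 0) :
    gsMatrix h n * toeplitz c n = σ2 • 1 := by
  refine eq_smul_one_of_submatrix_rev ?_ fun i j hij => ?_
  · rw [← submatrix_mul_equiv _ _ _ Fin.revPerm]
    exact congrArg₂ (· * ·) (gsMatrix_submatrix_rev hh) (toeplitz_submatrix_rev c n)
  · rw [mul_apply]
    simp only [gsMatrix, toeplitz, of_apply]
    rw [Fin.sum_univ_eq_sum_range (fun k => gsKernel h n i k * c ((k : ℤ) - j).natAbs),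
      sum_gsKernel_mul_of_le hh hh0 hYW (Fin.le_def.mp hij) j.isLt]
    simp only [Matrix.smul_apply, one_apply, Fin.ext_iff, smul_eq_mul, mul_ite, mul_one, mul_zero]

lemma autocorr_zero_zero (hh : support h ⊆ Set.Icc 0 n) :
    autocorr h 0 0 = ∑ m ∈ range (n + 1), h m ^ 2 := by
  rw [autocorr, ← finsum_comp_equiv (Equiv.neg ℤ), finsum_eq_sum_range (N := n + 1)]
  · simp [sq]
  · intro t ht
    have := hh (left_ne_zero_of_mul ht)
    simp only [Equiv.neg_apply, zero_sub, neg_neg, Set.mem_Icc, Set.mem_Ico] at this ⊢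
    omega

lemma trace_gsMatrix (hh : support h ⊆ Set.Icc 0 n) :
    (gsMatrix h n).trace = ∑ m ∈ range (n + 1), ((n : ℝ) - 2 * m) * h m ^ 2 := by
  have hupper : ∑ i ∈ range n, upperCorr h n i i = ∑ m ∈ range (n + 1), (m : ℝ) * h m ^ 2 := by
    rw [← sum_range_sum_range_add_add_one (G := fun m : ℕ => h m ^ 2)]
    · simp only [upperCorr, sq, Nat.cast_add, Nat.cast_one]
    · intro m hm
      rw [eq_zero_of_support_subset hh (t := m) (by omega), sq, mul_zero]
  have hreflect : ∑ i ∈ range n, upperCorr h n (n - 1 - i) (n - 1 - i) =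
      ∑ i ∈ range n, upperCorr h n i i := by
    rw [← sum_range_reflect (fun i : ℕ => upperCorr h n i i)]
    refine sum_congr rfl fun i hi => ?_
    have := mem_range.mp hi
    rw [show ((n - 1 - i : ℕ) : ℤ) = n - 1 - i by omega]
  have hlower (i : ℕ) (hi : i < n) :
      lowerCorr h n i i = autocorr h 0 0 - upperCorr h n i i := by
    rw [eq_sub_iff_add_eq, lowerCorr_add_upperCorr hh (by omega) (by omega),
      ← autocorr_sub_sub h i 0 0, sub_zero]
  simp only [trace, Matrix.diag, gsMatrix, of_apply]
  rw [Fin.sum_univ_eq_sum_range (fun i : ℕ => gsKernel h n i i)]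
  simp only [gsKernel]
  rw [sum_sub_distrib, hreflect, sum_congr rfl fun i hi => hlower i (mem_range.mp hi),
    sum_sub_distrib, sum_const, card_range, hupper, autocorr_zero_zero hh, nsmul_eq_mul,
    mul_sum, ← sum_sub_distrib, ← sum_sub_distrib]
  refine sum_congr rfl fun m _ => by ring

end GohbergSemencul

section ARProcess

variable {a : ℕ → ℝ} {p : ℕ}

variable (a) in
noncomputable def extendByZero : ℤ → ℝ := extend ((↑) : ℕ → ℤ) a 0

variable (a) in
@[simp]
lemma extendByZero_natCast (m : ℕ) : extendByZero a m = a m :=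
  Nat.cast_injective.extend_apply a 0 m

lemma support_extendByZero_subset (hap : ∀ ℓ, p < ℓ → a ℓ = 0) :
    support (extendByZero a) ⊆ Set.Icc 0 p := by
  intro t ht
  rcases le_or_gt 0 t with ht0 | hneg
  · obtain ⟨m, rfl⟩ := Int.eq_ofNat_of_zero_le ht0
    rw [mem_support, extendByZero_natCast] at ht
    simp only [Set.mem_Icc, Nat.cast_nonneg, Nat.cast_le, true_and]
    by_contra hmp
    exact ht (hap m (by omega))
  · exact absurd (extend_apply' _ _ _ fun ⟨m, hm⟩ => by omega) ht

lemma finsum_extendByZero_mul_natAbs {c : ℕ → ℝ} {σ2 : ℝ} (hap : ∀ ℓ, p < ℓ → a ℓ = 0)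
    (hYW : ∀ k : ℕ, ∑ ℓ ∈ range (p + 1), a ℓ * c ((k : ℤ) - (ℓ : ℤ)).natAbs =
      if k = 0 then σ2 else 0)
    {t : ℤ} (ht : 0 ≤ t) :
    ∑ᶠ m, extendByZero a m * c (t - m).natAbs = if t = 0 then σ2 else 0 := by
  obtain ⟨k, rfl⟩ := Int.eq_ofNat_of_zero_le ht
  rw [finsum_eq_sum_range (N := p + 1)]
  · simpa using hYW k
  · intro m hm
    have := support_extendByZero_subset hap (left_ne_zero_of_mul hm)
    simp only [Set.mem_Icc, Set.mem_Ico] at this ⊢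
    omega

end ARProcess

theorem ar_normalized_trace_inverse_general (p n : ℕ) (hpn : p ≤ n) (hn : 0 < n)
    (a : ℕ → ℝ) (σ2 : ℝ) (hσ : 0 < σ2) (ha0 : a 0 = 1) (hap : ∀ ℓ, p < ℓ → a ℓ = 0)
    (c : ℕ → ℝ)
    (hYW : ∀ k : ℕ, ∑ ℓ ∈ Finset.range (p + 1), a ℓ * c ((k : ℤ) - (ℓ : ℤ)).natAbs =
      if k = 0 then σ2 else 0) :
    (1 / (n : ℝ)) * ((toeplitz c n)⁻¹).trace =
      (1 / σ2) * ∑ ℓ ∈ Finset.range (n + 1), (1 - 2 * (ℓ : ℝ) / (n : ℝ)) * a ℓ ^ 2 := by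
  have hh : support (extendByZero a) ⊆ Set.Icc 0 n :=
    (support_extendByZero_subset hap).trans (Set.Icc_subset_Icc le_rfl (by exact_mod_cast hpn))
  have hh0 : extendByZero a 0 = 1 := by simpa [ha0] using extendByZero_natCast a 0
  have hinv : (toeplitz c n)⁻¹ = σ2⁻¹ • gsMatrix (extendByZero a) n := by
    refine inv_eq_left_inv ?_
    rw [smul_mul,
      gsMatrix_mul_toeplitz hh hh0 fun t ht => finsum_extendByZero_mul_natAbs hap hYW ht, smul_smul,
      inv_mul_cancel₀ hσ.ne', one_smul]
  rw [hinv, trace_smul, trace_gsMatrix hh, smul_eq_mul, mul_sum, mul_sum, mul_sum]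
  refine sum_congr rfl fun m _ => ?_
  have hn' : (n : ℝ) ≠ 0 := Nat.cast_ne_zero.mpr hn.ne'
  rw [extendByZero_natCast]
  field_simp

/-- for a stationary AR(p) process with coefficients a_0 = 1, a_1, …, a_p
(a_ℓ = 0 for ℓ > p) and innovation variance σ², the normalized trace-inverse of the
covariance matrix C_n of n ≥ p consecutive samples satisfies
M_n = (1/n)tr(C_n⁻¹) = (1/σ²) Σ_{ℓ=0}^{n} (1 − 2ℓ/n) a_ℓ². -/
theorem ar_normalized_trace_inverse (p n : ℕ) (hpn : p ≤ n) (hn : 0 < n)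
    (a : ℕ → ℝ) (σ2 : ℝ) (hσ : 0 < σ2) (ha0 : a 0 = 1) (hap : ∀ ℓ, p < ℓ → a ℓ = 0)
    (c : ℕ → ℝ)
    (hYW : ∀ k : ℕ, ∑ ℓ ∈ Finset.range (p + 1), a ℓ * c ((k : ℤ) - (ℓ : ℤ)).natAbs =
      if k = 0 then σ2 else 0)
    (hPD : (toeplitz c n).PosDef) :
    (1 / (n : ℝ)) * ((toeplitz c n)⁻¹).trace =
      (1 / σ2) * ∑ ℓ ∈ Finset.range (n + 1), (1 - 2 * (ℓ : ℝ) / (n : ℝ)) * a ℓ ^ 2 :=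
  ar_normalized_trace_inverse_general p n hpn hn a σ2 hσ ha0 hap c hYW
end
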